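/- Let k be a field of characteristic zero and d a positive integer. Consider the action of GL_d(k) on the polynomial ring k[C^L, C^R], where C^L and C^R are d×d matrices of indeterminates, given by g·C^L = C^L·g and g·C^R = g⁻¹·C^R (i.e., the group acts on the pair of matrix variables by (C^L, C^R) ↦ (C^L g, g⁻¹ C^R)). Then the invariant subring k[C^L,C^R]^{GL_d(k)} is generated as a k-algebra by the d² entries of the matrix product C^L·C^R. -/

import Mathlib

open MvPolynomial

/-- Variables: two `d×d` matrices of indeterminates `C^L` and `C^R`. -/
abbrev CVars (d : ℕ) := (Fin d × Fin d) ⊕ (Fin d × Fin d)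

noncomputable def cL (k : Type*) [CommRing k] (d : ℕ) :
    Matrix (Fin d) (Fin d) (MvPolynomial (CVars d) k) :=
  fun i j => X (Sum.inl (i, j))

noncomputable def cR (k : Type*) [CommRing k] (d : ℕ) :
    Matrix (Fin d) (Fin d) (MvPolynomial (CVars d) k) :=
  fun i j => X (Sum.inr (i, j))

/-- The action of `g ∈ GL_d(k)` on `k[C^L, C^R]` given by `C^L ↦ C^L·g`,
`C^R ↦ g⁻¹·C^R`. -/
noncomputable def glActC (k : Type*) [CommRing k] (d : ℕ) (g : GL (Fin d) k) :
    MvPolynomial (CVars d) k →ₐ[k] MvPolynomial (CVars d) k :=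
  aeval fun v =>
    match v with
    | Sum.inl (i, j) => ∑ r : Fin d,
        X (Sum.inl (i, r)) * C ((g : Matrix (Fin d) (Fin d) k) r j)
    | Sum.inr (i, j) => ∑ r : Fin d,
        C ((↑g⁻¹ : Matrix (Fin d) (Fin d) k) i r) * X (Sum.inr (r, j))

/-!
If `A` is invertible, invariance of `f` under `g = A⁻¹` gives `f(A, B) = f(1, AB)`. Hence `f` and
`F(C^L C^R)`, where `F(Y) = f(1, Y)`, agree on the dense set `det C^L ≠ 0`, so they are equal
because `k` is infinite. Conversely the entries of `C^L C^R` are invariant, since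
`(C^L g)(g⁻¹ C^R) = C^L C^R`.
-/

theorem MvPolynomial.eval_aeval {R σ τ : Type*} [CommRing R] (x : τ → R)
    (φ : σ → MvPolynomial τ R) (p : MvPolynomial σ R) :
    eval x (aeval φ p) = eval (fun v => eval x (φ v)) p :=
  comp_aeval_apply (f := φ) (aeval x) p

theorem MvPolynomial.eq_of_eval_eq_of_eval_ne_zero {R σ : Type*} [CommRing R] [IsDomain R]
    [Infinite R] {p q r : MvPolynomial σ R} (hp : p ≠ 0)
    (h : ∀ x, eval x p ≠ 0 → eval x q = eval x r) : q = r := by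
  have hpqr : p * (q - r) = 0 := funext fun x => by
    by_cases hx : eval x p = 0
    · simp [hx]
    · simp [h x hx]
  exact sub_eq_zero.1 ((mul_eq_zero.1 hpqr).resolve_left hp)

section

variable {k : Type*} {d : ℕ}

/-- The point `(C^L, C^R) = (A, B)`. -/
def matrixPoint (A B : Matrix (Fin d) (Fin d) k) : CVars d → k :=
  Sum.elim (fun ij => A ij.1 ij.2) (fun ij => B ij.1 ij.2)

theorem exists_matrixPoint_eq (x : CVars d → k) : ∃ A B, matrixPoint A B = x :=
  ⟨fun i j => x (Sum.inl (i, j)), fun i j => x (Sum.inr (i, j)), by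
    funext v; rcases v with ⟨i, j⟩ | ⟨i, j⟩ <;> rfl⟩

variable [CommRing k]

theorem map_eval_matrixPoint_cL (A B : Matrix (Fin d) (Fin d) k) :
    (cL k d).map (eval (matrixPoint A B)) = A := by
  ext i j; simp [cL, matrixPoint]

theorem map_eval_matrixPoint_cR (A B : Matrix (Fin d) (Fin d) k) :
    (cR k d).map (eval (matrixPoint A B)) = B := by
  ext i j; simp [cR, matrixPoint]

theorem eval_matrixPoint_cL_mul_cR (A B : Matrix (Fin d) (Fin d) k) (i j : Fin d) :
    eval (matrixPoint A B) ((cL k d * cR k d) i j) = (A * B) i j := by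
  rw [← Matrix.map_apply (f := eval (matrixPoint A B)), Matrix.map_mul, map_eval_matrixPoint_cL,
    map_eval_matrixPoint_cR]

theorem eval_matrixPoint_det_cL (A B : Matrix (Fin d) (Fin d) k) :
    eval (matrixPoint A B) (cL k d).det = A.det := by
  rw [RingHom.map_det, RingHom.mapMatrix_apply, map_eval_matrixPoint_cL]

theorem det_cL_ne_zero [Nontrivial k] : (cL k d).det ≠ 0 := fun h => by
  simpa [eval_matrixPoint_det_cL] using congrArg (eval (matrixPoint (1 : Matrix _ _ k) 0)) h

theorem eval_matrixPoint_glActC (g : GL (Fin d) k) (A B : Matrix (Fin d) (Fin d) k)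
    (f : MvPolynomial (CVars d) k) :
    eval (matrixPoint A B) (glActC k d g f) =
      eval (matrixPoint (A * (g : Matrix (Fin d) (Fin d) k))
        ((↑g⁻¹ : Matrix (Fin d) (Fin d) k) * B)) f := by
  rw [glActC, eval_aeval]
  refine congrArg (fun x => eval x f) (funext fun v => ?_)
  rcases v with ⟨i, j⟩ | ⟨i, j⟩ <;> simp [matrixPoint, Matrix.mul_apply]

theorem map_glActC_cL (g : GL (Fin d) k) :
    (cL k d).map (glActC k d g) = cL k d * (g : Matrix (Fin d) (Fin d) k).map C := by
  ext i j; simp [glActC, cL, Matrix.mul_apply]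

theorem map_glActC_cR (g : GL (Fin d) k) :
    (cR k d).map (glActC k d g) = (↑g⁻¹ : Matrix (Fin d) (Fin d) k).map C * cR k d := by
  ext i j; simp [glActC, cR, Matrix.mul_apply]

theorem map_glActC_cL_mul_cR (g : GL (Fin d) k) :
    (cL k d * cR k d).map (glActC k d g) = cL k d * cR k d := by
  rw [Matrix.map_mul, map_glActC_cL, map_glActC_cR, Matrix.mul_assoc,
    ← Matrix.mul_assoc (Matrix.map _ C), ← Matrix.map_mul, Units.mul_inv,
    Matrix.map_one _ C_0 C_1, Matrix.one_mul]

variable (k d) in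
/-- `F(Y) ↦ F(C^L C^R)`. -/
noncomputable def prodSubst : MvPolynomial (Fin d × Fin d) k →ₐ[k] MvPolynomial (CVars d) k :=
  aeval fun ij => (cL k d * cR k d) ij.1 ij.2

variable (k d) in
/-- `f(C^L, C^R) ↦ f(1, Y)`. -/
noncomputable def specializeLeftOne :
    MvPolynomial (CVars d) k →ₐ[k] MvPolynomial (Fin d × Fin d) k :=
  aeval (Sum.elim (fun ij => C ((1 : Matrix (Fin d) (Fin d) k) ij.1 ij.2)) X)

theorem range_prodSubst : (prodSubst k d).range =
    Algebra.adjoin k {p : MvPolynomial (CVars d) k | ∃ i j, p = (cL k d * cR k d) i j} := by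
  rw [prodSubst, ← Algebra.adjoin_range_eq_range_aeval]
  congr 1
  ext p
  simp [eq_comm]

theorem glActC_prodSubst (g : GL (Fin d) k) (F : MvPolynomial (Fin d × Fin d) k) :
    glActC k d g (prodSubst k d F) = prodSubst k d F := by
  rw [← AlgHom.comp_apply]
  congr 1
  refine algHom_ext fun ij => ?_
  simpa [prodSubst] using congrFun (congrFun (map_glActC_cL_mul_cR g) ij.1) ij.2

theorem eval_matrixPoint_prodSubst (A B : Matrix (Fin d) (Fin d) k)
    (F : MvPolynomial (Fin d × Fin d) k) :
    eval (matrixPoint A B) (prodSubst k d F) = eval (fun ij => (A * B) ij.1 ij.2) F := by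
  simp only [prodSubst, eval_aeval, eval_matrixPoint_cL_mul_cR]

theorem eval_specializeLeftOne (M : Matrix (Fin d) (Fin d) k) (f : MvPolynomial (CVars d) k) :
    eval (fun ij => M ij.1 ij.2) (specializeLeftOne k d f) = eval (matrixPoint 1 M) f := by
  rw [specializeLeftOne, eval_aeval]
  refine congrArg (fun x => eval x f) (funext fun v => ?_)
  rcases v with ⟨i, j⟩ | ⟨i, j⟩ <;> simp [matrixPoint]

theorem eval_matrixPoint_of_forall_glActC_eq {f : MvPolynomial (CVars d) k}
    (hf : ∀ g : GL (Fin d) k, glActC k d g f = f) {A : Matrix (Fin d) (Fin d) k}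
    (hA : IsUnit A.det) (B : Matrix (Fin d) (Fin d) k) :
    eval (matrixPoint A B) f = eval (matrixPoint 1 (A * B)) f := by
  obtain ⟨u, rfl⟩ := (Matrix.isUnit_iff_isUnit_det A).2 hA
  conv_lhs => rw [← hf u⁻¹]
  rw [eval_matrixPoint_glActC, Units.mul_inv, inv_inv]

end

theorem stmt10_general (k : Type*) [Field k] [CharZero k] (d : ℕ)
    (f : MvPolynomial (CVars d) k) :
    (∀ g : GL (Fin d) k, glActC k d g f = f) ↔
      f ∈ Algebra.adjoin k
        {p : MvPolynomial (CVars d) k | ∃ i j, p = (cL k d * cR k d) i j} := by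
  rw [← range_prodSubst]
  constructor
  · intro hf
    refine (AlgHom.mem_range _).2
      ⟨specializeLeftOne k d f, eq_of_eval_eq_of_eval_ne_zero det_cL_ne_zero fun x hx => ?_⟩
    obtain ⟨A, B, rfl⟩ := exists_matrixPoint_eq x
    rw [eval_matrixPoint_det_cL] at hx
    rw [eval_matrixPoint_prodSubst, eval_specializeLeftOne,
      eval_matrixPoint_of_forall_glActC_eq hf (isUnit_iff_ne_zero.2 hx)]
  · intro hf g
    obtain ⟨F, rfl⟩ := (AlgHom.mem_range _).1 hf
    exact glActC_prodSubst g F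

/-- Weyl's first fundamental theorem for `k[V ⊗ V^∨]`: a polynomial
in `k[C^L, C^R]` is invariant under the `GL_d(k)`-action `(C^L,C^R) ↦ (C^L g, g⁻¹ C^R)`
iff it lies in the `k`-subalgebra generated by the `d²` entries of `C^L·C^R`. -/
theorem stmt10 (k : Type*) [Field k] [CharZero k] (d : ℕ) (hd : 0 < d)
    (f : MvPolynomial (CVars d) k) :
    (∀ g : GL (Fin d) k, glActC k d g f = f) ↔
      f ∈ Algebra.adjoin k
        {p : MvPolynomial (CVars d) k | ∃ i j, p = (cL k d * cR k d) i j} :=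
  stmt10_general k d f
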